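/- On the set S₁ of 36 lines in ℍ⁴, the relation ℓ ~ ℓ' defined by 'ℓ = ℓ' or ℓ is orthogonal to ℓ'' is an equivalence relation, and it has exactly 9 equivalence classes (called frames), each consisting of 4 mutually orthogonal lines. -/

import Mathlib

/-!
Every line of `S₁` is spanned by a vector with coordinates in the integral quaternions `ℍ[ℤ]`;
scaling the 24 lines of the second kind on the right so that their first coordinate is `1`, the
36 lines can be listed explicitly, grouped as the frames `{e₁ ± e₂, e₃ ± e₄}`, ... and
`{(1, ±a, ±b, ±c)}` with `(a, b, c)` a permutation of `(i, j, k)` and an even number of minus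
signs. Orthogonality of lines is the vanishing of the Hermitian product of spanning vectors,
which over `ℍ[ℤ]` is decidable, so all 36² orthogonality relations are checked by computation.
Distinct entries of the list span distinct lines because each line is orthogonal to the other
three members of its frame but not to itself.
-/

noncomputable section

local notation "ℍ" => Quaternion ℝ

/-- The standard Hermitian form on `ℍ⁴`, conjugate-linear in the first variable and
ℍ-linear in the second: `⟨x,y⟩ = ∑ i, star (x i) * y i`. -/
def qInner {n : ℕ} (x y : Fin n → ℍ) : ℍ := ∑ i, star (x i) * y i

/-- The ℍ-line `vℍ` spanned by `v` (the set of right scalar multiples of `v`). -/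
def lineOf {n : ℕ} (v : Fin n → ℍ) : Set (Fin n → ℍ) := {w | ∃ c : ℍ, w = fun i => v i * c}

/-- Two lines are orthogonal when `⟨x,y⟩ = 0` for all `x` in one and `y` in the other. -/
def linesOrth {n : ℕ} (ℓ ℓ' : Set (Fin n → ℍ)) : Prop := ∀ x ∈ ℓ, ∀ y ∈ ℓ', qInner x y = 0

/-- The quaternion `i`. -/
def qi : ℍ := ⟨0, 1, 0, 0⟩
/-- The quaternion `j`. -/
def qj : ℍ := ⟨0, 0, 1, 0⟩
/-- The quaternion `k`. -/
def qk : ℍ := ⟨0, 0, 0, 1⟩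

/-- The quadruple `(1, i, j, k)`. -/
def baseQuat : Fin 4 → ℍ := ![1, qi, qj, qk]

/-- The line system `S₁` of 36 lines in `ℍ⁴`: the 12 lines spanned by `e_p + ε e_q`
(`p < q`, `ε = ±1`) together with the 24 lines spanned by the signed permutations of
`(1,i,j,k)` with an even number of minus signs (i.e. product of signs `= 1`). -/
def S1 : Set (Set (Fin 4 → ℍ)) :=
  {ℓ | (∃ p q : Fin 4, p < q ∧ ∃ ε : ℍ, (ε = 1 ∨ ε = -1) ∧
          ℓ = lineOf (Pi.single p 1 + Pi.single q ε)) ∨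
       (∃ σ : Equiv.Perm (Fin 4), ∃ s : Fin 4 → ℍ, (∀ i, s i = 1 ∨ s i = -1) ∧
          s 0 * s 1 * s 2 * s 3 = 1 ∧ ℓ = lineOf fun idx => s idx * baseQuat (σ idx))}

/-- The frame relation on lines: `ℓ ~ ℓ'` iff `ℓ = ℓ'` or `ℓ ⊥ ℓ'`. -/
def frameRel (ℓ ℓ' : Set (Fin 4 → ℍ)) : Prop := ℓ = ℓ' ∨ linesOrth ℓ ℓ'

namespace Quaternion

variable {R S : Type*} [CommRing R] [CommRing S]

instance [DecidableEq R] : DecidableEq (Quaternion R) := fun a b =>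
  decidable_of_iff (a.re = b.re ∧ a.imI = b.imI ∧ a.imJ = b.imJ ∧ a.imK = b.imK)
    QuaternionAlgebra.ext_iff.symm

def map (f : R →+* S) (a : Quaternion R) : Quaternion S := ⟨f a.re, f a.imI, f a.imJ, f a.imK⟩

@[simp] lemma re_map (f : R →+* S) (a : Quaternion R) : (map f a).re = f a.re := rfl
@[simp] lemma imI_map (f : R →+* S) (a : Quaternion R) : (map f a).imI = f a.imI := rfl
@[simp] lemma imJ_map (f : R →+* S) (a : Quaternion R) : (map f a).imJ = f a.imJ := rfl
@[simp] lemma imK_map (f : R →+* S) (a : Quaternion R) : (map f a).imK = f a.imK := rfl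

def mapRingHom (f : R →+* S) : Quaternion R →+* Quaternion S where
  toFun := map f
  map_one' := by ext <;> simp
  map_mul' a b := by ext <;> simp [re_mul, imI_mul, imJ_mul, imK_mul]
  map_zero' := by ext <;> simp
  map_add' a b := by ext <;> simp

lemma mapRingHom_injective {f : R →+* S} (hf : Function.Injective f) :
    Function.Injective (mapRingHom f) := fun a b h => by
  ext
  exacts [hf congr(($h).re), hf congr(($h).imI), hf congr(($h).imJ), hf congr(($h).imK)]

variable (f : R →+* S) (a : Quaternion R)

@[simp] lemma re_mapRingHom : (mapRingHom f a).re = f a.re := rfl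
@[simp] lemma imI_mapRingHom : (mapRingHom f a).imI = f a.imI := rfl
@[simp] lemma imJ_mapRingHom : (mapRingHom f a).imJ = f a.imJ := rfl
@[simp] lemma imK_mapRingHom : (mapRingHom f a).imK = f a.imK := rfl

lemma mapRingHom_star : mapRingHom f (star a) = star (mapRingHom f a) := by
  ext <;> simp

end Quaternion

lemma Function.Injective.of_rel_iff_fst_eq_and_ne {α β γ : Type*} [Nontrivial γ]
    {L : β × γ → α} {O : α → α → Prop}
    (hO : ∀ a b, O (L a) (L b) ↔ a.1 = b.1 ∧ a ≠ b) :
    Function.Injective L := by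
  intro a b hab
  by_contra hne
  obtain ⟨r, hr⟩ := exists_ne a.2
  have hac : O (L a) (L (a.1, r)) := (hO _ _).2 ⟨rfl, fun h => hr (congrArg Prod.snd h).symm⟩
  rw [hab] at hac
  have hba : O (L a) (L b) := (hO a b).2 ⟨((hO _ _).1 hac).1.symm, hne⟩
  rw [hab] at hba
  exact ((hO b b).1 hba).2 rfl

theorem exists_equivalence_of_rel_iff_fst_eq {X β γ : Type*} [Nonempty γ] (e : β × γ ≃ X)
    {r : X → X → Prop} (hr : ∀ a b, r (e a) (e b) ↔ a.1 = b.1) :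
    ∃ h : Equivalence r, Nat.card (Quotient (Setoid.mk r h)) = Nat.card β ∧
      ∀ x, Nat.card {y // r x y} = Nat.card γ := by
  set f : X → β := fun x => (e.symm x).1
  obtain rfl : r = fun x y => f x = f y := by
    funext x y
    simpa using hr (e.symm x) (e.symm y)
  have hf : Function.Surjective f := fun b => ⟨e (b, Classical.arbitrary γ), by simp [f]⟩
  refine ⟨(Setoid.ker f).iseqv, Nat.card_congr (Setoid.quotientKerEquivOfSurjective f hf), ?_⟩
  intro x
  calc Nat.card {y // f x = f y}
      = Nat.card {p : β × γ // f x = p.1} :=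
        Nat.card_congr (e.symm.subtypeEquiv fun _ => Iff.rfl)
    _ = Nat.card γ := by
      rw [Nat.card_congr Equiv.prodSubtypeFstEquivSubtypeProd, Nat.card_prod]
      simp

section Lines

variable {n : ℕ}

lemma mem_lineOf_self (v : Fin n → ℍ) : v ∈ lineOf v := ⟨1, by simp⟩

lemma lineOf_subset_of_mem {v w : Fin n → ℍ} (h : w ∈ lineOf v) : lineOf w ⊆ lineOf v := by
  obtain ⟨c, rfl⟩ := h
  rintro x ⟨d, rfl⟩
  exact ⟨c * d, by simp [mul_assoc]⟩

lemma lineOf_mul_right (v : Fin n → ℍ) {c : ℍ} (hc : c ≠ 0) :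
    lineOf (fun i => v i * c) = lineOf v :=
  (lineOf_subset_of_mem ⟨c, rfl⟩).antisymm
    (lineOf_subset_of_mem ⟨c⁻¹, by simp [hc]⟩)

lemma qInner_mul_right (x y : Fin n → ℍ) (c d : ℍ) :
    qInner (fun i => x i * c) (fun i => y i * d) = star c * qInner x y * d := by
  simp only [qInner, Finset.mul_sum, Finset.sum_mul, star_mul, mul_assoc]

lemma linesOrth_lineOf_iff {v w : Fin n → ℍ} :
    linesOrth (lineOf v) (lineOf w) ↔ qInner v w = 0 := by
  refine ⟨fun h => h v (mem_lineOf_self v) w (mem_lineOf_self w), ?_⟩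
  rintro h x ⟨c, rfl⟩ y ⟨d, rfl⟩
  rw [qInner_mul_right, h, mul_zero, zero_mul]

end Lines

section IntegerModel

def castQ : Quaternion ℤ →+* ℍ := Quaternion.mapRingHom (Int.castRingHom ℝ)

lemma castQ_injective : Function.Injective castQ :=
  Quaternion.mapRingHom_injective Int.cast_injective

def intInner {n : ℕ} (x y : Fin n → Quaternion ℤ) : Quaternion ℤ := ∑ i, star (x i) * y i

lemma qInner_castQ {n : ℕ} (x y : Fin n → Quaternion ℤ) :
    qInner (castQ ∘ x) (castQ ∘ y) = castQ (intInner x y) := by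
  simp [qInner, intInner, castQ, Quaternion.mapRingHom_star]

def iZ : Quaternion ℤ := ⟨0, 1, 0, 0⟩
def jZ : Quaternion ℤ := ⟨0, 0, 1, 0⟩
def kZ : Quaternion ℤ := ⟨0, 0, 0, 1⟩

def baseQuatZ : Fin 4 → Quaternion ℤ := ![1, iZ, jZ, kZ]

def signZ (b : Bool) : Quaternion ℤ := if b then 1 else -1

def singleSumZ (p q : Fin 4) (e : Bool) : Fin 4 → Quaternion ℤ :=
  Pi.single p 1 + Pi.single q (signZ e)

def signedPermZ (σ : Equiv.Perm (Fin 4)) (t : Fin 4 → Bool) : Fin 4 → Quaternion ℤ :=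
  fun i => signZ (t i) * baseQuatZ (σ i)

def normalizeZ {n : ℕ} (v : Fin (n + 1) → Quaternion ℤ) : Fin (n + 1) → Quaternion ℤ :=
  fun i => v i * star (v 0)

/-- Spanning vectors of the 36 lines of `S₁`, the `f`-th row holding the four lines of the
`f`-th frame. -/
def frameVec : Fin 9 → Fin 4 → Fin 4 → Quaternion ℤ := ![
  ![![1, 1, 0, 0], ![1, -1, 0, 0], ![0, 0, 1, 1], ![0, 0, 1, -1]],
  ![![1, 0, 1, 0], ![1, 0, -1, 0], ![0, 1, 0, 1], ![0, 1, 0, -1]],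
  ![![1, 0, 0, 1], ![1, 0, 0, -1], ![0, 1, 1, 0], ![0, 1, -1, 0]],
  ![![1, iZ, jZ, kZ], ![1, iZ, -jZ, -kZ], ![1, -iZ, jZ, -kZ], ![1, -iZ, -jZ, kZ]],
  ![![1, iZ, kZ, jZ], ![1, iZ, -kZ, -jZ], ![1, -iZ, kZ, -jZ], ![1, -iZ, -kZ, jZ]],
  ![![1, jZ, iZ, kZ], ![1, jZ, -iZ, -kZ], ![1, -jZ, iZ, -kZ], ![1, -jZ, -iZ, kZ]],
  ![![1, jZ, kZ, iZ], ![1, jZ, -kZ, -iZ], ![1, -jZ, kZ, -iZ], ![1, -jZ, -kZ, iZ]],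
  ![![1, kZ, iZ, jZ], ![1, kZ, -iZ, -jZ], ![1, -kZ, iZ, -jZ], ![1, -kZ, -iZ, jZ]],
  ![![1, kZ, jZ, iZ], ![1, kZ, -jZ, -iZ], ![1, -kZ, jZ, -iZ], ![1, -kZ, -jZ, iZ]]]

def lineVecZ (a : Fin 9 × Fin 4) : Fin 4 → Quaternion ℤ := frameVec a.1 a.2

end IntegerModel

section TableFacts

set_option maxRecDepth 10000

lemma intInner_lineVecZ_eq_zero_iff (a b : Fin 9 × Fin 4) :
    intInner (lineVecZ a) (lineVecZ b) = 0 ↔ a.1 = b.1 ∧ a ≠ b := by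
  revert a b; decide

lemma exists_lineVecZ_eq_singleSumZ (p q : Fin 4) (hpq : p < q) (e : Bool) :
    ∃ a, lineVecZ a = singleSumZ p q e := by
  revert p q e; decide

lemma exists_lineVecZ_eq_normalizeZ (σ : Equiv.Perm (Fin 4)) (t : Fin 4 → Bool)
    (ht : signZ (t 0) * signZ (t 1) * signZ (t 2) * signZ (t 3) = 1) :
    ∃ a, lineVecZ a = normalizeZ (signedPermZ σ t) := by
  revert σ t; decide

lemma lineVecZ_cases (a : Fin 9 × Fin 4) :
    (∃ p q : Fin 4, p < q ∧ ∃ e, lineVecZ a = singleSumZ p q e) ∨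
      ∃ σ t, signZ (t 0) * signZ (t 1) * signZ (t 2) * signZ (t 3) = 1 ∧
        lineVecZ a = normalizeZ (signedPermZ σ t) := by
  revert a; decide

end TableFacts

section Transfer

lemma castQ_signZ_eq_one_or (b : Bool) : castQ (signZ b) = 1 ∨ castQ (signZ b) = -1 := by
  cases b <;> simp [signZ]

lemma exists_castQ_signZ_eq {ε : ℍ} (h : ε = 1 ∨ ε = -1) : ∃ b, castQ (signZ b) = ε := by
  rcases h with rfl | rfl
  exacts [⟨true, by simp [signZ]⟩, ⟨false, by simp [signZ]⟩]

lemma castQ_baseQuatZ (m : Fin 4) : castQ (baseQuatZ m) = baseQuat m := by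
  fin_cases m <;> ext <;> simp [castQ, baseQuatZ, baseQuat] <;> simp [iZ, jZ, kZ, qi, qj, qk]

lemma castQ_comp_singleSumZ (p q : Fin 4) (e : Bool) :
    castQ ∘ singleSumZ p q e = Pi.single p 1 + Pi.single q (castQ (signZ e)) := by
  funext i
  simp only [Function.comp_apply, singleSumZ, Pi.add_apply, map_add, Pi.single_apply,
    apply_ite castQ, map_one, map_zero]

lemma castQ_comp_signedPermZ (σ : Equiv.Perm (Fin 4)) (t : Fin 4 → Bool) :
    castQ ∘ signedPermZ σ t = fun i => castQ (signZ (t i)) * baseQuat (σ i) := by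
  funext i
  simp [signedPermZ, castQ_baseQuatZ]

lemma signedPermZ_zero_ne_zero (σ : Equiv.Perm (Fin 4)) (t : Fin 4 → Bool) :
    signedPermZ σ t 0 ≠ 0 := by
  have key : ∀ b m, signZ b * baseQuatZ m ≠ 0 := by decide
  exact key _ _

lemma lineOf_castQ_normalizeZ {n : ℕ} (v : Fin (n + 1) → Quaternion ℤ) (hv : v 0 ≠ 0) :
    lineOf (castQ ∘ normalizeZ v) = lineOf (castQ ∘ v) := by
  have hc : castQ (star (v 0)) ≠ 0 :=
    (map_ne_zero_iff _ castQ_injective).2 (star_ne_zero.2 hv)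
  simpa [normalizeZ, Function.comp_def] using lineOf_mul_right (castQ ∘ v) hc

def frameLine (a : Fin 9 × Fin 4) : Set (Fin 4 → ℍ) := lineOf (castQ ∘ lineVecZ a)

lemma S1_eq_range_frameLine : S1 = Set.range frameLine := by
  ext ℓ
  constructor
  · rintro (⟨p, q, hpq, ε, hε, rfl⟩ | ⟨σ, s, hs, hprod, rfl⟩)
    · obtain ⟨e, rfl⟩ := exists_castQ_signZ_eq hε
      obtain ⟨a, ha⟩ := exists_lineVecZ_eq_singleSumZ p q hpq e
      exact ⟨a, by rw [frameLine, ha, castQ_comp_singleSumZ]⟩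
    · choose t ht using fun i => exists_castQ_signZ_eq (hs i)
      have hsign : signZ (t 0) * signZ (t 1) * signZ (t 2) * signZ (t 3) = 1 :=
        castQ_injective (by simpa [ht] using hprod)
      obtain ⟨a, ha⟩ := exists_lineVecZ_eq_normalizeZ σ t hsign
      refine ⟨a, ?_⟩
      rw [frameLine, ha, lineOf_castQ_normalizeZ _ (signedPermZ_zero_ne_zero σ t),
        castQ_comp_signedPermZ]
      simp only [ht]
  · rintro ⟨a, rfl⟩
    rcases lineVecZ_cases a with ⟨p, q, hpq, e, he⟩ | ⟨σ, t, hsign, ht⟩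
    · refine Or.inl ⟨p, q, hpq, _, castQ_signZ_eq_one_or e, ?_⟩
      rw [frameLine, he, castQ_comp_singleSumZ]
    · refine Or.inr ⟨σ, fun i => castQ (signZ (t i)), fun i => castQ_signZ_eq_one_or (t i),
        by simpa using congrArg castQ hsign, ?_⟩
      rw [frameLine, ht, lineOf_castQ_normalizeZ _ (signedPermZ_zero_ne_zero σ t),
        castQ_comp_signedPermZ]

end Transfer

lemma linesOrth_frameLine_iff (a b : Fin 9 × Fin 4) :
    linesOrth (frameLine a) (frameLine b) ↔ a.1 = b.1 ∧ a ≠ b := by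
  rw [frameLine, frameLine, linesOrth_lineOf_iff, qInner_castQ, map_eq_zero_iff _ castQ_injective,
    intInner_lineVecZ_eq_zero_iff]

lemma frameLine_injective : Function.Injective frameLine :=
  .of_rel_iff_fst_eq_and_ne linesOrth_frameLine_iff

lemma frameRel_frameLine_iff (a b : Fin 9 × Fin 4) :
    frameRel (frameLine a) (frameLine b) ↔ a.1 = b.1 := by
  rw [frameRel, frameLine_injective.eq_iff, linesOrth_frameLine_iff]
  constructor
  · rintro (rfl | ⟨h, -⟩) <;> trivial
  · intro h
    by_cases hab : a = b
    exacts [Or.inl hab, Or.inr ⟨h, hab⟩]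

/-- On the set `S₁` of 36 lines in `ℍ⁴`, the relation "equal or orthogonal" is an
equivalence relation with exactly 9 classes (frames), each consisting of 4 mutually
orthogonal lines. -/
theorem frames_of_S1 :
    Nat.card S1 = 36 ∧
    ∃ h : Equivalence fun a b : {ℓ // ℓ ∈ S1} => frameRel a.1 b.1,
      Nat.card (Quotient (Setoid.mk _ h)) = 9 ∧
      ∀ a : {ℓ // ℓ ∈ S1}, Nat.card {b : {ℓ // ℓ ∈ S1} // frameRel a.1 b.1} = 4 := by
  rw [S1_eq_range_frameLine]
  refine ⟨by rw [Nat.card_range_of_injective frameLine_injective]; simp, ?_⟩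
  simpa using exists_equivalence_of_rel_iff_fst_eq (Equiv.ofInjective _ frameLine_injective)
    (r := fun a b => frameRel a.1 b.1) frameRel_frameLine_iff
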